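/- arXiv:1507.04650 — 4 statements merged into one kernel-verified Lean document; each statement's English description precedes it below -/
import Mathlib

section
/- If T is a tree of order n, then there exists a set D of at most ⌈(n-2)/3⌉ vertices of T such that every vertex u of T that has degree at least 2 and does not belong to D has a neighbor in D. -/
open SimpleGraph Finset

/-- The degree of a vertex `v` in a simple graph `G`. -/
noncomputable def deg {V : Type*} [Fintype V] (G : SimpleGraph V) (v : V) : ℕ :=
  Nat.card {u // G.Adj v u}

/-- The degree sequence of `G` as a multiset. -/
noncomputable def degSeq {V : Type*} [Fintype V] (G : SimpleGraph V) : Multiset ℕ :=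
  Finset.univ.val.map (deg G)

/-- `D` is a dominating set of `G`. -/
def IsDomSet {V : Type*} (G : SimpleGraph V) (D : Set V) : Prop :=
  ∀ v ∉ D, ∃ u ∈ D, G.Adj u v

/-- The domination number of `G`. -/
noncomputable def domNum {V : Type*} [Fintype V] (G : SimpleGraph V) : ℕ :=
  sInf {k | ∃ D : Set V, IsDomSet G D ∧ D.ncard = k}

/-- `I` is an independent set of `G`. -/
def IsIndepSet' {V : Type*} (G : SimpleGraph V) (I : Set V) : Prop :=
  ∀ u ∈ I, ∀ v ∈ I, ¬ G.Adj u v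

/-- The independence number of `G`. -/
noncomputable def indepNum {V : Type*} [Fintype V] (G : SimpleGraph V) : ℕ :=
  sSup {k | ∃ I : Set V, IsIndepSet' G I ∧ I.ncard = k}

/-- `v` is a support vertex of `G`: degree at least 2 with a neighbor of degree 1. -/
noncomputable def IsSupport {V : Type*} [Fintype V] (G : SimpleGraph V) (v : V) : Prop :=
  2 ≤ deg G v ∧ ∃ u, G.Adj v u ∧ deg G u = 1

section Aux

variable {V : Type*} {T : SimpleGraph V}

private lemma aux_concat_isPath {u v w : V} {p : T.Walk u v} (hp : p.IsPath)
    (h : T.Adj v w) (hw : w ∉ p.support) : (p.concat h).IsPath := by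
  rw [← Walk.isPath_reverse_iff, Walk.reverse_concat]
  exact (Walk.cons_isPath_iff _ _).2 ⟨hp.reverse, by simpa [Walk.support_reverse] using hw⟩

private lemma aux_mem_support_dist_lt [DecidableEq V] {r u : V} (p : T.Walk r u) {v : V}
    (hv : v ∈ p.support) (hne : v ≠ u) : T.dist r v < p.length := by
  have h1 : T.dist r v ≤ (p.takeUntil v hv).length := SimpleGraph.dist_le _
  have h2 := congrArg Walk.length (p.take_spec hv)
  rw [Walk.length_append] at h2
  have h3 : (p.dropUntil v hv).length ≠ 0 := fun h0 => hne (Walk.eq_of_length_eq_zero h0)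
  omega

private lemma aux_adj_dist_ne [DecidableEq V] (hT : T.Connected) (hac : T.IsAcyclic) (r : V) {u v : V}
    (h : T.Adj u v) : T.dist r u ≠ T.dist r v := by
  intro heq
  obtain ⟨p, hp, hpl⟩ := hT.exists_path_of_dist r v
  obtain ⟨q, hq, hql⟩ := hT.exists_path_of_dist r u
  have hvq : v ∉ q.support := by
    intro hmem
    have := aux_mem_support_dist_lt q hmem (Ne.symm h.ne)
    omega
  have hq' : (q.concat h).IsPath := aux_concat_isPath hq h hvq
  have huniq := hac.path_unique ⟨p, hp⟩ ⟨q.concat h, hq'⟩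
  have hlen := congrArg (fun P : T.Path r v => (P : T.Walk r v).length) huniq
  simp only [Walk.length_concat] at hlen
  omega

private lemma aux_parent_exists (hT : T.Connected) {r v : V} (h : T.dist r v ≠ 0) :
    ∃ u, T.Adj v u ∧ T.dist r u + 1 = T.dist r v := by
  obtain ⟨p, hp, hpl⟩ := hT.exists_path_of_dist v r
  cases p with
  | nil => rw [SimpleGraph.dist_self] at h; exact absurd rfl h
  | @cons _ u' _ hadj rest =>
    refine ⟨u', hadj, ?_⟩
    have h1 : T.dist u' r ≤ rest.length := SimpleGraph.dist_le rest
    have h2 : T.dist v r ≤ T.dist v u' + T.dist u' r := hT.dist_triangle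
    have h3 : T.dist v u' = 1 := SimpleGraph.dist_eq_one_iff_adj.2 hadj
    have h4 : T.dist r u' = T.dist u' r := SimpleGraph.dist_comm
    have h5 : T.dist r v = T.dist v r := SimpleGraph.dist_comm
    simp only [Walk.length_cons] at hpl
    omega

private lemma aux_parent_unique [DecidableEq V] (hT : T.Connected) (hac : T.IsAcyclic) {r v a b : V}
    (ha : T.Adj v a) (hda : T.dist r a + 1 = T.dist r v)
    (hb : T.Adj v b) (hdb : T.dist r b + 1 = T.dist r v) : a = b := by
  obtain ⟨p, hp, hpl⟩ := hT.exists_path_of_dist r a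
  obtain ⟨q, hq, hql⟩ := hT.exists_path_of_dist r b
  have hvp : v ∉ p.support := by
    intro hmem
    have := aux_mem_support_dist_lt p hmem ha.ne
    omega
  have hvq : v ∉ q.support := by
    intro hmem
    have := aux_mem_support_dist_lt q hmem hb.ne
    omega
  have P1 : (p.concat ha.symm).IsPath := aux_concat_isPath hp ha.symm hvp
  have P2 : (q.concat hb.symm).IsPath := aux_concat_isPath hq hb.symm hvq
  have huniq := hac.path_unique ⟨p.concat ha.symm, P1⟩ ⟨q.concat hb.symm, P2⟩
  have heq : p.concat ha.symm = q.concat hb.symm := congrArg Subtype.val huniq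
  obtain ⟨hv, -⟩ := Walk.concat_inj heq
  exact hv

private lemma aux_child_exists [Fintype V] [DecidableEq V] [DecidableRel T.Adj]
    (hT : T.Connected) (hac : T.IsAcyclic) {r v : V}
    (h : T.dist r v ≠ 0) (hdeg : 2 ≤ T.degree v) :
    ∃ u, T.Adj v u ∧ T.dist r u = T.dist r v + 1 := by
  obtain ⟨pp, hpp, hppd⟩ := aux_parent_exists hT h
  have hex : ∃ u ∈ T.neighborFinset v, u ≠ pp := by
    by_contra h'
    push_neg at h'
    have hsub : T.neighborFinset v ⊆ {pp} := fun x hx => Finset.mem_singleton.2 (h' x hx)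
    have := Finset.card_le_card hsub
    rw [Finset.card_singleton] at this
    have hdd : (T.neighborFinset v).card = T.degree v := rfl
    omega
  obtain ⟨u, hu, hne⟩ := hex
  have hadj : T.Adj v u := by rwa [SimpleGraph.mem_neighborFinset] at hu
  have h1 : T.dist r u ≠ T.dist r v := fun hh => aux_adj_dist_ne hT hac r hadj.symm hh
  have h2 : T.dist r u ≤ T.dist r v + 1 := by
    have := hT.dist_triangle (u := r) (v := v) (w := u)
    have h3 : T.dist v u = 1 := SimpleGraph.dist_eq_one_iff_adj.2 hadj
    omega
  have h3 : T.dist r v ≤ T.dist r u + 1 := by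
    have := hT.dist_triangle (u := r) (v := u) (w := v)
    have h4 : T.dist u v = 1 := SimpleGraph.dist_eq_one_iff_adj.2 hadj.symm
    omega
  refine ⟨u, hadj, ?_⟩
  by_contra hne2
  have hpar : T.dist r u + 1 = T.dist r v := by omega
  exact hne (aux_parent_unique hT hac hadj hpar hpp hppd)

private lemma aux_deg_eq_degree [Fintype V] [DecidableRel T.Adj] (v : V) :
    deg T v = T.degree v := by
  rw [deg, Nat.card_eq_fintype_card, ← SimpleGraph.card_neighborSet_eq_degree]
  exact Fintype.card_congr (Equiv.refl _)

private lemma aux_exists_leaf [Fintype V] [DecidableRel T.Adj]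
    (hT : T.Connected) (hac : T.IsAcyclic) (hcard : 2 ≤ Fintype.card V) :
    ∃ r, T.degree r = 1 := by
  classical
  have htree : T.IsTree := ⟨hT, hac⟩
  have hedge : T.edgeFinset.card + 1 = Fintype.card V := htree.card_edgeFinset
  have hsum : ∑ v, T.degree v = 2 * T.edgeFinset.card := T.sum_degrees_eq_twice_card_edges
  have hdegpos : ∀ v, 0 < T.degree v := by
    intro v
    rw [SimpleGraph.degree_pos_iff_exists_adj]
    obtain ⟨w, hw⟩ := Fintype.exists_ne_of_one_lt_card (by omega) v
    obtain ⟨p⟩ := hT.preconnected v w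
    cases p with
    | nil => exact absurd rfl hw.symm
    | cons h q => exact ⟨_, h⟩
  by_contra hno
  push_neg at hno
  have hall : ∀ v, 2 ≤ T.degree v := fun v => by
    have h1 := hdegpos v
    have h2 := hno v
    omega
  have hbig : 2 * Fintype.card V ≤ ∑ v, T.degree v := by
    calc 2 * Fintype.card V = ∑ _v : V, 2 := by
          rw [Finset.sum_const, Finset.card_univ, smul_eq_mul]; ring
      _ ≤ ∑ v, T.degree v := Finset.sum_le_sum fun i _ => hall i
  omega

end Aux

theorem stmt_0 {V : Type*} [Fintype V] (n : ℕ) (hn : Fintype.card V = n)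
    (T : SimpleGraph V) (hT : T.Connected) (hac : T.IsAcyclic) :
    ∃ D : Set V, D.ncard ≤ (n - 2) ⌈/⌉ 3 ∧
      ∀ u, 2 ≤ deg T u → u ∉ D → ∃ w ∈ D, T.Adj u w := by
  classical
  subst hn
  by_cases hsmall : Fintype.card V ≤ 1
  · refine ⟨∅, by simp, ?_⟩
    intro u hu _
    rw [aux_deg_eq_degree] at hu
    have := T.degree_lt_card_verts u
    omega
  push_neg at hsmall
  obtain ⟨r, hr⟩ := aux_exists_leaf hT hac hsmall
  have hrdeg : deg T r = 1 := by rw [aux_deg_eq_degree]; exact hr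
  have hrpos : 0 < T.degree r := by omega
  obtain ⟨a, ha⟩ := (T.degree_pos_iff_exists_adj r).mp hrpos
  have huniq : ∀ v, T.Adj r v → v = a := by
    intro v hv
    have h1 : v ∈ T.neighborFinset r := (SimpleGraph.mem_neighborFinset _ _ _).2 hv
    have h2 : a ∈ T.neighborFinset r := (SimpleGraph.mem_neighborFinset _ _ _).2 ha
    exact Finset.card_le_one.mp (le_of_eq hr) v h1 a h2
  set d : V → ℕ := fun v => T.dist r v with hd
  have hd0 : ∀ v, d v = 0 ↔ v = r := by
    intro v
    simp only [hd]
    rw [hT.dist_eq_zero_iff]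
    exact eq_comm
  have hd1 : ∀ v, d v = 1 → v = a := fun v hv =>
    huniq v (SimpleGraph.dist_eq_one_iff_adj.1 hv)
  have hda : d a = 1 := SimpleGraph.dist_eq_one_iff_adj.2 ha
  have hra : r ≠ a := ha.ne
  have hparent : ∀ v, d v ≠ 0 → ∃ u, T.Adj v u ∧ d u + 1 = d v := by
    intro v hv
    exact aux_parent_exists hT hv
  have hchild : ∀ v, d v ≠ 0 → 2 ≤ deg T v → ∃ u, T.Adj v u ∧ d u = d v + 1 := by
    intro v hv hdeg
    rw [aux_deg_eq_degree] at hdeg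
    exact aux_child_exists hT hac hv hdeg
  have hdne0 : ∀ u, 2 ≤ deg T u → d u ≠ 0 := by
    intro u hdeg h0
    have : u = r := (hd0 u).1 h0
    subst this
    omega
  -- counting
  set S : Finset V := Finset.univ.filter (fun v => 2 ≤ d v) with hS
  have hScard : S.card = Fintype.card V - 2 := by
    have hcompl : Finset.univ.filter (fun v => ¬ 2 ≤ d v) = {r, a} := by
      ext v
      simp only [Finset.mem_filter, Finset.mem_univ, true_and, Finset.mem_insert,
        Finset.mem_singleton]
      constructor
      · intro hv
        have : d v = 0 ∨ d v = 1 := by omega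
        rcases this with h | h
        · exact Or.inl ((hd0 v).1 h)
        · exact Or.inr (hd1 v h)
      · rintro (h | h)
        · have : d v = 0 := (hd0 v).2 h
          omega
        · have : d v = 1 := by rw [h]; exact hda
          omega
    have hfil := Finset.card_filter_add_card_filter_not
      (s := (Finset.univ : Finset V)) (p := fun v => 2 ≤ d v)
    rw [hcompl] at hfil
    have hra2 : ({r, a} : Finset V).card = 2 := by
      rw [Finset.card_insert_of_notMem (by simpa using hra), Finset.card_singleton]
    rw [Finset.card_univ, ← hS, hra2] at hfil
    omega
  set c : ℕ → ℕ := fun i => (S.filter (fun v => d v % 3 = i)).card with hc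
  have hcsum : c 0 + c 1 + c 2 = S.card := by
    have h1 := Finset.card_filter_add_card_filter_not
      (s := S) (p := fun v => d v % 3 = 0)
    have h2 := Finset.card_filter_add_card_filter_not
      (s := S.filter (fun v => ¬ d v % 3 = 0)) (p := fun v => d v % 3 = 1)
    have e1 : (S.filter (fun v => ¬ d v % 3 = 0)).filter (fun v => d v % 3 = 1)
        = S.filter (fun v => d v % 3 = 1) := by
      rw [Finset.filter_filter]
      apply Finset.filter_congr
      intro x _
      constructor
      · exact fun h => h.2
      · intro h; exact ⟨by omega, h⟩
    have e2 : (S.filter (fun v => ¬ d v % 3 = 0)).filter (fun v => ¬ d v % 3 = 1)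
        = S.filter (fun v => d v % 3 = 2) := by
      rw [Finset.filter_filter]
      apply Finset.filter_congr
      intro x _
      constructor
      · intro h
        have := Nat.mod_lt (d x) (show 0 < 3 by norm_num)
        omega
      · intro h; constructor <;> omega
    rw [e1, e2] at h2
    simp only [hc]
    omega
  have hc0 : c 0 = (S.filter (fun v => d v % 3 = 0)).card := rfl
  have hc1 : c 1 = (S.filter (fun v => d v % 3 = 1)).card := rfl
  have hc2 : c 2 = (S.filter (fun v => d v % 3 = 2)).card := rfl
  set K := (Fintype.card V - 2) ⌈/⌉ 3 with hK
  have h3K : Fintype.card V - 2 ≤ 3 * K := by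
    have : K = (Fintype.card V - 2 + 3 - 1) / 3 := Nat.ceilDiv_eq_add_pred_div _ _
    omega
  rcases le_or_gt (c 2) K with hcase | hcase
  · -- class 2
    refine ⟨↑(Finset.univ.filter (fun v => d v % 3 = 2)), ?_, ?_⟩
    · rw [Set.ncard_coe_finset]
      have he : Finset.univ.filter (fun v => d v % 3 = 2)
          = S.filter (fun v => d v % 3 = 2) := by
        rw [hS, Finset.filter_filter]
        apply Finset.filter_congr
        intro x _
        constructor
        · intro h; exact ⟨by omega, h⟩
        · exact fun h => h.2
      rw [he]
      exact le_trans (le_of_eq rfl) hcase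
    · intro u hdeg hu
      have hu' : ¬ d u % 3 = 2 := by simpa using hu
      have hur : d u ≠ 0 := hdne0 u hdeg
      by_cases h1 : d u % 3 = 1
      · obtain ⟨w, hw, hdw⟩ := hchild u hur hdeg
        exact ⟨w, by simp only [Finset.coe_filter, Set.mem_setOf_eq,
          Finset.mem_univ, true_and]; omega, hw⟩
      · have h0 : d u % 3 = 0 := by omega
        obtain ⟨w, hw, hdw⟩ := hparent u hur
        exact ⟨w, by simp only [Finset.coe_filter, Set.mem_setOf_eq,
          Finset.mem_univ, true_and]; omega, hw⟩
  · have hmin : c 0 + 1 ≤ K ∨ c 1 + 1 ≤ K := by omega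
    rcases hmin with hm | hm
    · -- class 0 with a
      refine ⟨↑(insert a (Finset.univ.filter (fun v => d v % 3 = 0 ∧ d v ≠ 0))), ?_, ?_⟩
      · rw [Set.ncard_coe_finset]
        have he : Finset.univ.filter (fun v => d v % 3 = 0 ∧ d v ≠ 0)
            = S.filter (fun v => d v % 3 = 0) := by
          rw [hS, Finset.filter_filter]
          apply Finset.filter_congr
          intro x _
          constructor
          · intro h; exact ⟨by omega, h.1⟩
          · intro h; exact ⟨h.2, by omega⟩
        calc (insert a (Finset.univ.filter (fun v => d v % 3 = 0 ∧ d v ≠ 0))).card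
            ≤ (Finset.univ.filter (fun v => d v % 3 = 0 ∧ d v ≠ 0)).card + 1 :=
              Finset.card_insert_le _ _
          _ ≤ K := by rw [he]; omega
      · intro u hdeg hu
        have hu' : u ≠ a ∧ ¬ (d u % 3 = 0 ∧ d u ≠ 0) := by
          simpa using hu
        have hur : d u ≠ 0 := hdne0 u hdeg
        have hu1 : d u ≠ 1 := fun h1 => hu'.1 (hd1 u h1)
        have humod : d u % 3 ≠ 0 := fun h => hu'.2 ⟨h, hur⟩
        by_cases h2 : d u % 3 = 2
        · obtain ⟨w, hw, hdw⟩ := hchild u hur hdeg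
          refine ⟨w, ?_, hw⟩
          simp only [Finset.coe_insert, Set.mem_insert_iff, Finset.coe_filter,
            Set.mem_setOf_eq, Finset.mem_univ, true_and]
          right; omega
        · have h1 : d u % 3 = 1 := by omega
          obtain ⟨w, hw, hdw⟩ := hparent u hur
          refine ⟨w, ?_, hw⟩
          simp only [Finset.coe_insert, Set.mem_insert_iff, Finset.coe_filter,
            Set.mem_setOf_eq, Finset.mem_univ, true_and]
          right; omega
    · -- class 1 with a
      refine ⟨↑(insert a (Finset.univ.filter (fun v => d v % 3 = 1 ∧ d v ≠ 1))), ?_, ?_⟩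
      · rw [Set.ncard_coe_finset]
        have he : Finset.univ.filter (fun v => d v % 3 = 1 ∧ d v ≠ 1)
            = S.filter (fun v => d v % 3 = 1) := by
          rw [hS, Finset.filter_filter]
          apply Finset.filter_congr
          intro x _
          constructor
          · intro h; exact ⟨by omega, h.1⟩
          · intro h; exact ⟨h.2, by omega⟩
        calc (insert a (Finset.univ.filter (fun v => d v % 3 = 1 ∧ d v ≠ 1))).card
            ≤ (Finset.univ.filter (fun v => d v % 3 = 1 ∧ d v ≠ 1)).card + 1 :=
              Finset.card_insert_le _ _
          _ ≤ K := by rw [he]; omega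
      · intro u hdeg hu
        have hu' : u ≠ a ∧ ¬ (d u % 3 = 1 ∧ d u ≠ 1) := by
          simpa using hu
        have hur : d u ≠ 0 := hdne0 u hdeg
        have hu1 : d u ≠ 1 := fun h1 => hu'.1 (hd1 u h1)
        have humod : d u % 3 ≠ 1 := fun h => hu'.2 ⟨h, hu1⟩
        by_cases h0 : d u % 3 = 0
        · obtain ⟨w, hw, hdw⟩ := hchild u hur hdeg
          refine ⟨w, ?_, hw⟩
          simp only [Finset.coe_insert, Set.mem_insert_iff, Finset.coe_filter,
            Set.mem_setOf_eq, Finset.mem_univ, true_and]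
          right; omega
        · have h2 : d u % 3 = 2 := by omega
          obtain ⟨w, hw, hdw⟩ := hparent u hur
          refine ⟨w, ?_, hw⟩
          simp only [Finset.coe_insert, Set.mem_insert_iff, Finset.coe_filter,
            Set.mem_setOf_eq, Finset.mem_univ, true_and]
          by_cases hw1 : d w = 1
          · exact Or.inl (hd1 w hw1)
          · right; omega
end

section
/- A sequence d = (d_1,...,d_n) of non-negative integers is the degree sequence of some forest if and only if the sum of all d_i is an even number at most 2(n - n_0(d)) - 2, where n_0(d) is the number of zero entries of d (assuming n_0(d) < n). -/
open SimpleGraph Finset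

/-!
A forest with `e ≥ 1` edges lives on its non-isolated vertices, of which there are `m`, and it
extends to a spanning tree of the complete graph on them, so `e ≤ m - 1`; the degree sum `2e` is
thus even and at most `2m - 2`.

Conversely, a sequence satisfying the two conditions with positive sum has an entry equal to `1`
(otherwise the sum would be at least `2m`). Delete that leaf and lower by one an entry `t` of
another vertex, choosing `d t ≥ 2` when possible: the new sequence again satisfies the conditions,
so by induction it is realised by a forest in which the leaf is isolated, and joining the leaf to
`t` creates no cycle.
-/

namespace SimpleGraph

variable {V : Type*} {G : SimpleGraph V} {u t : V}

lemma IsIsolated.not_reachable (hu : G.IsIsolated u) (hut : u ≠ t) : ¬G.Reachable u t := by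
  rintro ⟨_ | ⟨hadj, _⟩⟩
  exacts [hut rfl, hu _ hadj]

lemma degree_sup_edge [Fintype V] [DecidableEq V] (hut : u ≠ t) (hn : ¬G.Adj u t) (v : V)
    [Fintype (G.neighborSet v)] [Fintype ((G ⊔ edge u t).neighborSet v)] :
    (G ⊔ edge u t).degree v =
      G.degree v + (if v = u then 1 else 0) + (if v = t then 1 else 0) := by
  rw [← card_neighborFinset_eq_degree,
    neighborFinset_sup_of_disjoint (v := v) (h := G.disjoint_edge.mpr hn), card_disjUnion,
    card_neighborFinset_eq_degree, add_assoc]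
  congr 1
  by_cases hvu : v = u
  · subst hvu
    have : (edge v t).neighborFinset v = {t} := by ext; simp [edge_adj]; grind
    simp [this, hut]
  by_cases hvt : v = t
  · subst hvt
    have : (edge u v).neighborFinset v = {u} := by ext; simp [edge_adj]; grind
    simp [this, hvu]
  have : (edge u t).neighborFinset v = ∅ := by ext; simp [edge_adj]; grind
  simp [this, hvu, hvt]

lemma IsAcyclic.card_edgeFinset_add_one_le [Fintype V] [Nonempty V] [Fintype G.edgeSet]
    (hG : G.IsAcyclic) : #G.edgeFinset + 1 ≤ Fintype.card V := by
  classical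
  obtain ⟨T, hGT, -, hT⟩ := connected_top.exists_isTree_le_of_le_of_isAcyclic le_top hG
  calc #G.edgeFinset + 1 ≤ #T.edgeFinset + 1 := by gcongr
    _ = Fintype.card V := hT.card_edgeFinset

lemma IsAcyclic.sum_degrees_le [Fintype V] [DecidableRel G.Adj] (hG : G.IsAcyclic) :
    ∑ v, G.degree v ≤ 2 * #{v | G.degree v ≠ 0} - 2 := by
  rw [sum_degrees_eq_twice_card_edges]
  rcases G.edgeFinset.eq_empty_or_nonempty with he | ⟨e, he⟩
  · simp [he]
  have hsupp : G.support.toFinset = ({v | G.degree v ≠ 0} : Finset V) := by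
    ext v
    simp [mem_support_iff_not_isIsolated, degree_eq_zero]
  have : Nonempty G.support := by
    induction e using Sym2.ind with
    | _ a b => exact ⟨⟨a, b, mem_edgeFinset.mp he⟩⟩
  have h := (hG.induce G.support).card_edgeFinset_add_one_le
  rw [card_edgeFinset_induce_support, ← Set.toFinset_card, hsupp] at h
  omega

end SimpleGraph

section DegreeSequence

variable {V : Type*} {d : V → ℕ} {u t : V}

/-- The degrees left after deleting an edge `ut`. -/
def decrementPair [DecidableEq V] (d : V → ℕ) (u t : V) (v : V) : ℕ :=
  d v - (if v = u then 1 else 0) - (if v = t then 1 else 0)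

lemma decrementPair_add [DecidableEq V] (hut : u ≠ t) (hu : d u ≠ 0) (ht : d t ≠ 0) (v : V) :
    decrementPair d u t v + (if v = u then 1 else 0) + (if v = t then 1 else 0) = d v := by
  by_cases hvu : v = u <;> by_cases hvt : v = t <;> simp [decrementPair, hvu, hvt] <;> grind

variable [Fintype V]

lemma exists_eq_one_of_sum_le (hpos : ∑ v, d v ≠ 0)
    (hle : ∑ v, d v ≤ 2 * #{v | d v ≠ 0} - 2) : ∃ u, d u = 1 := by
  by_contra! h
  have : #{v | d v ≠ 0} • 2 ≤ ∑ v ∈ {v | d v ≠ 0}, d v :=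
    card_nsmul_le_sum _ _ _ fun v hv => by have := h v; simp at hv; omega
  rw [sum_filter_ne_zero, smul_eq_mul] at this
  omega

lemma exists_ne_ne_zero_and_two_le_or_forall_le_one (heven : Even (∑ v, d v)) (hu : d u = 1) :
    ∃ t ≠ u, d t ≠ 0 ∧ (2 ≤ d t ∨ ∀ w, d w ≤ 1) := by
  by_cases hbig : ∃ t ≠ u, 2 ≤ d t
  · obtain ⟨t, htu, ht⟩ := hbig
    exact ⟨t, htu, by omega, Or.inl ht⟩
  obtain ⟨t, htu, ht⟩ : ∃ t ≠ u, d t ≠ 0 := by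
    by_contra! h
    rw [Fintype.sum_eq_single u h, hu] at heven
    exact Nat.not_even_one heven
  push Not at hbig
  exact ⟨t, htu, ht, Or.inr fun w => by by_cases hw : w = u <;> grind⟩

lemma sum_le_card_filter_ne_zero (h : ∀ v, d v ≤ 1) : ∑ v, d v ≤ #{v | d v ≠ 0} := by
  rw [← sum_filter_ne_zero]
  simpa using sum_le_card_nsmul _ _ 1 fun v _ => h v

variable [DecidableEq V]

lemma card_filter_ne_zero_le_add_card {d' : V → ℕ} (s : Finset V)
    (h : ∀ v ∉ s, d v ≠ 0 → d' v ≠ 0) : #{v | d v ≠ 0} ≤ #{v | d' v ≠ 0} + #s :=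
  calc #{v | d v ≠ 0} ≤ #(({v | d' v ≠ 0} : Finset V) ∪ s) :=
        card_le_card fun v hv => by by_cases hvs : v ∈ s <;> simp_all
    _ ≤ #{v | d' v ≠ 0} + #s := card_union_le _ _

lemma sum_decrementPair (hut : u ≠ t) (hu : d u ≠ 0) (ht : d t ≠ 0) :
    ∑ v, decrementPair d u t v + 2 = ∑ v, d v := by
  simp only [← decrementPair_add hut hu ht, sum_add_distrib, sum_ite_eq', mem_univ, if_true]

lemma sum_decrementPair_le (hut : u ≠ t) (hu : d u = 1) (ht : d t ≠ 0)
    (hbig : 2 ≤ d t ∨ ∀ w, d w ≤ 1) (heven : Even (∑ v, d v))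
    (hle : ∑ v, d v ≤ 2 * #{v | d v ≠ 0} - 2) :
    ∑ v, decrementPair d u t v ≤ 2 * #{v | decrementPair d u t v ≠ 0} - 2 := by
  have hsum := sum_decrementPair hut (by omega) ht
  have hdecomp := decrementPair_add hut (by omega) ht
  rcases hbig with ht2 | hone
  · have hcard := card_filter_ne_zero_le_add_card (d := d) (d' := decrementPair d u t) {u}
      fun v hv hdv => by
        have := hdecomp v
        rw [mem_singleton] at hv
        rcases eq_or_ne v t with rfl | hvt
        · simp only [hv, if_true, if_false] at this; omega
        · simp_all
    rw [card_singleton] at hcard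
    omega
  · have hcard := card_filter_ne_zero_le_add_card (d := d) (d' := decrementPair d u t) {u, t}
      fun v hv hdv => by
        simp only [mem_insert, mem_singleton, not_or] at hv
        have := hdecomp v
        simp_all
    rw [card_pair hut] at hcard
    have := sum_le_card_filter_ne_zero hone
    obtain ⟨k, hk⟩ := heven
    omega

end DegreeSequence

namespace SimpleGraph

variable {V : Type*} [Fintype V] [DecidableEq V]

open Classical in
theorem exists_isAcyclic_degree_eq (d : V → ℕ) (heven : Even (∑ v, d v))
    (hle : ∑ v, d v ≤ 2 * #{v | d v ≠ 0} - 2) :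
    ∃ G : SimpleGraph V, G.IsAcyclic ∧ ∀ v, G.degree v = d v := by
  induction hs : ∑ v, d v using Nat.strong_induction_on generalizing d with
  | _ s ih =>
  subst hs
  rcases eq_or_ne (∑ v, d v) 0 with h0 | hpos
  · exact ⟨⊥, isAcyclic_bot, fun v => by simp [sum_eq_zero_iff.mp h0 v (mem_univ v)]⟩
  obtain ⟨u, hu⟩ := exists_eq_one_of_sum_le hpos hle
  obtain ⟨t, htu, ht, hbig⟩ := exists_ne_ne_zero_and_two_le_or_forall_le_one heven hu
  have hsum := sum_decrementPair htu.symm (by omega) ht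
  obtain ⟨G, hG, hdeg⟩ := ih _ (by omega) (d := decrementPair d u t)
    (by obtain ⟨k, hk⟩ := heven; exact ⟨k - 1, by omega⟩)
    (sum_decrementPair_le htu.symm hu ht hbig heven hle) rfl
  have hiso : G.IsIsolated u := (G.degree_eq_zero u).mp (by simp [hdeg, decrementPair, hu])
  refine ⟨G ⊔ edge u t, hG.sup_edge_of_not_reachable (hiso.not_reachable htu.symm), fun v => ?_⟩
  rw [degree_sup_edge htu.symm (hiso t), hdeg, decrementPair_add htu.symm (by omega) ht]

end SimpleGraph

lemma deg_eq_degree {V : Type*} [Fintype V] (G : SimpleGraph V) (v : V)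
    [Fintype (G.neighborSet v)] : deg G v = G.degree v := by
  rw [deg, ← card_neighborSet_eq_degree, ← Nat.card_eq_fintype_card]
  rfl

lemma degSeq_eq_map_degree {V : Type*} [Fintype V] (G : SimpleGraph V) [DecidableRel G.Adj] :
    degSeq G = univ.val.map fun v => G.degree v := by
  simp only [degSeq, deg_eq_degree]

lemma card_filter_ne_zero_eq_card_filter_map {V : Type*} [Fintype V] (f : V → ℕ) :
    #{v | f v ≠ 0} = Multiset.card ((univ.val.map f).filter (· ≠ 0)) := by
  rw [Multiset.filter_map, Multiset.card_map]
  rfl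

theorem stmt_1_general (n : ℕ) (d : Fin n → ℕ) :
    (∃ G : SimpleGraph (Fin n), G.IsAcyclic ∧ degSeq G = Finset.univ.val.map d) ↔
      (Even (∑ i, d i) ∧
        ∑ i, d i ≤ 2 * (n - (Finset.univ.filter fun i => d i = 0).card) - 2) := by
  classical
  have hsupp : n - #{i | d i = 0} = #{i | d i ≠ 0} := by
    have := card_filter_add_card_filter_not (s := univ) (fun i => d i = 0)
    rw [card_univ, Fintype.card_fin] at this
    simp only [ne_eq]
    omega
  rw [hsupp]
  constructor
  · rintro ⟨G, hG, hseq⟩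
    rw [degSeq_eq_map_degree] at hseq
    have hsum : ∑ v, G.degree v = ∑ i, d i := congrArg Multiset.sum hseq
    have hcard : #{v | G.degree v ≠ 0} = #{i | d i ≠ 0} := by
      rw [card_filter_ne_zero_eq_card_filter_map, card_filter_ne_zero_eq_card_filter_map, hseq]
    rw [← hsum, ← hcard]
    exact ⟨G.sum_degrees_eq_twice_card_edges ▸ even_two_mul _, hG.sum_degrees_le⟩
  · rintro ⟨heven, hle⟩
    obtain ⟨G, hG, hdeg⟩ := exists_isAcyclic_degree_eq d heven hle
    exact ⟨G, hG, by simp only [degSeq, deg_eq_degree, hdeg]⟩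

theorem stmt_1 (n : ℕ) (d : Fin n → ℕ)
    (h0 : (Finset.univ.filter fun i => d i = 0).card < n) :
    (∃ G : SimpleGraph (Fin n), G.IsAcyclic ∧ degSeq G = Finset.univ.val.map d) ↔
      (Even (∑ i, d i) ∧
        ∑ i, d i ≤ 2 * (n - (Finset.univ.filter fun i => d i = 0).card) - 2) :=
  stmt_1_general n d
end

section
/- Let d = (d_1,...,d_n) be a non-increasing sequence of positive integers with d_1 ≥ 2 and ∑ d_i = 2n - 2c for a positive integer c. If n_1(d) > n_{≥2}(d) and c - 1 < ⌈(n_1(d) - n_{≥2}(d))/2⌉, then the maximum of the domination number over all forests with degree sequence d equals n - n_1(d) + c - 1. -/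
open SimpleGraph Finset

/-!
Write `m` for the number of non-leaves; a forest with degree sequence `d` has `c` components since
`∑ d = 2n - 2c`.

Upper bound: the leaves whose neighbour is also a leaf make up `K₂` components, and the forest bound
`∑ deg ≤ 2 |S| - 2` on the union `S` of the other components shows there are at most `c - 1` of
them. The non-leaves together with one colour class of these `K₂`s (for a proper 2-colouring)
dominate.

Lower bound: as `n₁ - m ≥ 2c - 1`, there are enough leaves to build a tree on `n - 2 (c - 1)`
vertices, with the non-leaves of `d` as internal vertices, in which every internal vertex has a leaf
child; with `c - 1` copies of `K₂` this realises `d`. The tree is built breadth-first: internal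
vertices are handed to earlier ones in order of decreasing degree, each keeping a slot free for a
leaf. One leaf child of each internal vertex and one end of each `K₂` have pairwise disjoint closed
neighbourhoods, so every dominating set has at least `m + c - 1` vertices.
-/

namespace SimpleGraph

variable {V : Type*} {G : SimpleGraph V}

lemma deg_eq_degree [Fintype V] [DecidableRel G.Adj] (v : V) : deg G v = G.degree v := by
  rw [← card_neighborSet_eq_degree, ← Nat.card_eq_fintype_card]
  rfl

lemma eq_of_deg_eq_one [Fintype V] {v u w : V} (h : deg G v = 1) (hu : G.Adj v u)
    (hw : G.Adj v w) : u = w := by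
  have : Subsingleton {x // G.Adj v x} := (Nat.card_eq_one_iff_unique.mp h).1
  exact congrArg Subtype.val (Subsingleton.elim (⟨u, hu⟩ : {x // G.Adj v x}) ⟨w, hw⟩)

lemma exists_adj_of_deg_pos [Fintype V] {v : V} (h : 0 < deg G v) : ∃ u, G.Adj v u := by
  obtain ⟨⟨u, hu⟩⟩ := Nat.card_pos_iff.mp h |>.1
  exact ⟨u, hu⟩

/-- The largest vertex of a cycle would have two distinct smaller neighbours on it. -/
theorem isAcyclic_of_unique_lt_adj [LinearOrder V]
    (h : ∀ v u w, G.Adj v u → G.Adj v w → u < v → w < v → u = w) : G.IsAcyclic := by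
  classical
  intro v₀ c hc
  set w := c.support.toFinset.max' ⟨v₀, by simp⟩
  have hw : w ∈ c.support := List.mem_toFinset.mp (Finset.max'_mem _ _)
  have hle : ∀ x ∈ (c.rotate w hw).support, x ≤ w := fun x hx =>
    Finset.le_max' _ _ (List.mem_toFinset.mpr ((c.mem_support_rotate_iff w hw).mp hx))
  have hc' := hc.rotate hw
  have hnil : ¬ (c.rotate w hw).Nil := hc'.not_nil
  have hsnd := (c.rotate w hw).adj_snd hnil
  have hpen := (c.rotate w hw).adj_penultimate hnil
  exact hc'.snd_ne_penultimate <| h w _ _ hsnd hpen.symm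
    ((hle _ (Walk.getVert_mem_support _ _)).lt_of_ne hsnd.ne')
    ((hle _ (Walk.getVert_mem_support _ _)).lt_of_ne hpen.ne)

lemma domNum_le [Fintype V] {D : Set V} (hD : IsDomSet G D) : domNum G ≤ D.ncard :=
  Nat.sInf_le ⟨D, hD, rfl⟩

lemma le_domNum [Fintype V] {k : ℕ} (h : ∀ D, IsDomSet G D → k ≤ D.ncard) : k ≤ domNum G :=
  le_csInf ⟨_, Set.univ, fun _ hv => absurd (Set.mem_univ _) hv, rfl⟩
    (by rintro _ ⟨D, hD, rfl⟩; exact h D hD)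

/-- The closed neighbourhoods `{x i, s i}` are pairwise disjoint. -/
lemma card_le_ncard_of_isDomSet [Finite V] {ι : Type*} [Finite ι] {x s : ι → V}
    (hx : ∀ i v, G.Adj v (x i) ↔ v = s i) (hs : Function.Injective s) (hsx : ∀ i j, s i ≠ x j)
    {D : Set V} (hD : IsDomSet G D) : Nat.card ι ≤ D.ncard := by
  classical
  have hxs : ∀ i, x i ∉ D → s i ∈ D := fun i hi => by
    obtain ⟨u, hu, hadj⟩ := hD _ hi
    rwa [(hx i u).mp hadj] at hu
  have hxinj : Function.Injective x := fun i j h =>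
    hs <| (hx j (s i)).mp (h ▸ (hx i (s i)).mpr rfl)
  rw [← Set.ncard_univ]
  refine Set.ncard_le_ncard_of_injOn (fun i => if x i ∈ D then x i else s i)
    (fun i _ => by split_ifs with h <;> [exact h; exact hxs i h]) ?_ (Set.toFinite D)
  intro i _ j _ h
  dsimp only at h
  split_ifs at h
  · exact hxinj h
  · exact absurd h.symm (hsx j i)
  · exact absurd h (hsx i j)
  · exact hs h

lemma isDomSet_union_filter [DecidableEq V] {P : V → Prop} [DecidablePred P]
    (hP : ∀ u v, G.Adj u v → (P u ↔ ¬ P v)) {I B : Finset V}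
    (hI : ∀ v ∉ I, v ∉ B → ∃ u ∈ I, G.Adj u v) (hB : ∀ v ∈ B, ∃ u ∈ B, G.Adj u v) :
    IsDomSet G ↑(I ∪ B.filter P) := by
  intro v hv
  simp only [Finset.coe_union, Finset.coe_filter, Set.mem_union, Finset.mem_coe,
    Set.mem_ofPred_eq, not_or, not_and] at hv
  by_cases hvB : v ∈ B
  · obtain ⟨u, huB, hadj⟩ := hB v hvB
    exact ⟨u, by simp [huB, (hP u v hadj).mpr (hv.2 hvB)], hadj⟩
  · obtain ⟨u, huI, hadj⟩ := hI v hv.1 hvB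
    exact ⟨u, by simp [huI], hadj⟩

/-- Ore-type bound: splitting `B` along a proper 2-colouring, either colour class together
with `I` dominates. -/
lemma two_mul_domNum_le [Fintype V] (hG : G.Colorable 2) {I B : Finset V}
    (hI : ∀ v ∉ I, v ∉ B → ∃ u ∈ I, G.Adj u v) (hB : ∀ v ∈ B, ∃ u ∈ B, G.Adj u v) :
    2 * domNum G ≤ 2 * #I + #B := by
  classical
  obtain ⟨C⟩ := hG
  have hC : ∀ u v, G.Adj u v → (C u = 0 ↔ ¬ C v = 0) := fun u v h => by
    have := C.valid h
    omega
  have h₁ := domNum_le (isDomSet_union_filter hC hI hB)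
  have h₂ := domNum_le (isDomSet_union_filter (P := fun v => ¬ C v = 0)
    (fun u v h => by simp only [not_not]; exact (hC v u h.symm).symm) hI hB)
  rw [Set.ncard_coe_finset] at h₁ h₂
  have := B.card_filter_add_card_filter_not (C · = 0)
  have := card_union_le I (B.filter (C · = 0))
  have := card_union_le I (B.filter (¬ C · = 0))
  omega

theorem IsAcyclic.sum_deg_add_two_le [Fintype V] [Nonempty V] (hG : G.IsAcyclic) :
    ∑ v, deg G v + 2 ≤ 2 * Fintype.card V := by
  classical
  obtain ⟨F, hGF, -, hF⟩ := connected_top.exists_isTree_le_of_le_of_isAcyclic le_top hG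
  have hcard := hF.card_edgeFinset
  have hmono := card_le_card (edgeFinset_mono hGF)
  simp only [deg_eq_degree, sum_degrees_eq_twice_card_edges]
  omega

theorem IsAcyclic.sum_deg_add_two_le_of_closed [Fintype V] (hG : G.IsAcyclic) {S : Finset V}
    (hS : S.Nonempty) (hcl : ∀ v ∈ S, ∀ u, G.Adj v u → u ∈ S) :
    ∑ v ∈ S, deg G v + 2 ≤ 2 * #S := by
  have : Nonempty (S : Set V) := hS.to_subtype
  have h := (hG.induce (S : Set V)).sum_deg_add_two_le
  have hdeg : ∀ v : (S : Set V), deg (G.induce (S : Set V)) v = deg G v := fun v =>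
    Nat.card_congr (Equiv.subtypeSubtypeEquivSubtype fun h => hcl v v.2 _ h)
  simp only [hdeg] at h
  rwa [Finset.sum_set_coe (f := deg G) (s := S), Finset.toFinset_coe,
    ← Nat.card_eq_fintype_card, Nat.card_coe_set_eq, Set.ncard_coe_finset] at h

/-- The leaves whose neighbour is a leaf form `K₂` components; the forest bound on the rest of the
graph limits how many there are, and each needs only one dominating vertex. -/
theorem IsAcyclic.two_mul_domNum_add_sum_deg_le [Fintype V] (hG : G.IsAcyclic)
    (hpos : ∀ v, 0 < deg G v) (hI : ∃ v, 2 ≤ deg G v) :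
    2 * domNum G + ∑ v, deg G v + 2 ≤ 2 * #{v | 2 ≤ deg G v} + 2 * Fintype.card V := by
  classical
  set B : Finset V := {v | deg G v = 1 ∧ ∀ u, G.Adj v u → deg G u = 1}
  have hBadj : ∀ v ∈ B, ∀ u, G.Adj v u → u ∈ B := by
    intro v hv u hvu
    simp only [B, mem_filter, mem_univ, true_and] at hv ⊢
    refine ⟨hv.2 u hvu, fun w huw => ?_⟩
    rw [eq_of_deg_eq_one (hv.2 u hvu) huw hvu.symm]
    exact hv.1
  obtain ⟨v₀, hv₀⟩ := hI
  have hforest := hG.sum_deg_add_two_le_of_closed (S := Bᶜ)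
    ⟨v₀, by simp [B]; omega⟩
    (fun v hv u h => mem_compl.mpr fun hu => mem_compl.mp hv (hBadj u hu v h.symm))
  have hsplit : ∑ v, deg G v = ∑ v ∈ Bᶜ, deg G v + #B := by
    rw [← sum_compl_add_sum B, card_eq_sum_ones B]
    exact congrArg _ (sum_congr rfl fun v hv => (mem_filter.mp hv).2.1)
  have hdom := two_mul_domNum_le hG.isBipartite (I := {v | 2 ≤ deg G v}) (B := B)
    (fun v hvI hvB => by
      simp only [B, mem_filter, mem_univ, true_and, not_and, not_forall] at hvI hvB
      obtain ⟨u, hvu, hu⟩ := hvB (by have := hpos v; omega)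
      exact ⟨u, by simp only [mem_filter, mem_univ, true_and]; have := hpos u; omega, hvu.symm⟩)
    (fun v hv => by
      obtain ⟨u, hvu⟩ := exists_adj_of_deg_pos (hpos v)
      exact ⟨u, hBadj v hv u hvu, hvu.symm⟩)
  have := card_compl B
  omega

end SimpleGraph

section degSeq

variable {V ι : Type*} [Fintype V] [Fintype ι] {G : SimpleGraph V} {d : ι → ℕ}

lemma card_filter_deg_eq (h : degSeq G = univ.val.map d) (P : ℕ → Prop) [DecidablePred P] :
    #{v | P (deg G v)} = #{i | P (d i)} := by
  have := congrArg (Multiset.countP P) h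
  simp only [degSeq, Multiset.countP_map] at this
  exact this

lemma sum_deg_eq (h : degSeq G = univ.val.map d) : ∑ v, deg G v = ∑ i, d i :=
  congrArg Multiset.sum h

theorem SimpleGraph.IsAcyclic.two_mul_domNum_add_sum_le (hG : G.IsAcyclic)
    (h : degSeq G = univ.val.map d) (hpos : ∀ i, 0 < d i) (hm : 0 < #{i | 2 ≤ d i}) :
    2 * domNum G + ∑ i, d i + 2 ≤ 2 * #{i | 2 ≤ d i} + 2 * Fintype.card ι := by
  classical
  have hcard : Fintype.card V = Fintype.card ι := by
    simpa [degSeq] using congrArg Multiset.card h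
  have h0 := card_filter_deg_eq h (· = 0)
  have h2 := card_filter_deg_eq h (2 ≤ ·)
  rw [filter_false_of_mem fun i _ => (hpos i).ne', card_empty, card_eq_zero] at h0
  obtain ⟨v₀, hv₀⟩ := card_pos.mp (h2 ▸ hm)
  have := hG.two_mul_domNum_add_sum_deg_le
    (fun v => Nat.pos_of_ne_zero fun hv => (filter_eq_empty_iff.mp h0) (mem_univ v) hv)
    ⟨v₀, (mem_filter.mp hv₀).2⟩
  rw [h2, hcard, sum_deg_eq h] at this
  exact this

end degSeq

lemma card_filter_fin {n : ℕ} (Q : ℕ → Prop) [DecidablePred Q] :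
    #{i : Fin n | Q i} = #{x ∈ range n | Q x} :=
  card_bij (fun b _ => b) (by simp) (fun _ _ _ _ => Fin.ext)
    (fun x hx => ⟨⟨x, mem_range.mp (mem_filter.mp hx).1⟩, by simpa using (mem_filter.mp hx).2, rfl⟩)

/-- Each `x` is joined to its parent `p x`; the roots are the fixed points of `p`. -/
def parentGraph (n : ℕ) (p : ℕ → ℕ) : SimpleGraph (Fin n) :=
  SimpleGraph.fromRel fun a b => p a = b

section parentGraph

variable {n : ℕ} {p : ℕ → ℕ}

lemma parentGraph_adj {a b : Fin n} :
    (parentGraph n p).Adj a b ↔ (a : ℕ) ≠ b ∧ (p a = b ∨ p b = a) := by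
  simp [parentGraph, Fin.val_ne_iff]

lemma parentGraph_adj_iff_of_leaf {a : Fin n} (hroot : p a ≠ a)
    (hleaf : ∀ y < n, p y = a → y = a) (v : Fin n) :
    (parentGraph n p).Adj v a ↔ (v : ℕ) = p a := by
  have := hleaf v v.2
  rw [parentGraph_adj]
  omega

variable (hp : ∀ x < n, p x ≤ x)
include hp

lemma parentGraph_isAcyclic : (parentGraph n p).IsAcyclic := by
  have hpar : ∀ v u : Fin n, (parentGraph n p).Adj v u → u < v → (u : ℕ) = p v := by
    intro v u h huv
    rw [parentGraph_adj] at h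
    have := hp u u.2
    rw [Fin.lt_def] at huv
    omega
  exact SimpleGraph.isAcyclic_of_unique_lt_adj fun v u w hu hw hu' hw' =>
    Fin.ext <| (hpar v u hu hu').trans (hpar v w hw hw').symm

lemma deg_parentGraph (a : Fin n) :
    deg (parentGraph n p) a =
      #{x ∈ range n | x ≠ (a : ℕ) ∧ p x = a} + if p a = a then 0 else 1 := by
  have hpa := hp a a.2
  rw [deg]
  simp_rw [parentGraph_adj]
  rw [Nat.card_eq_fintype_card, Fintype.card_subtype,
    card_filter_fin (fun x => (a : ℕ) ≠ x ∧ (p a = x ∨ p x = a))]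
  have hsplit : {x ∈ range n | (a : ℕ) ≠ x ∧ (p a = x ∨ p x = a)}
      = {x ∈ range n | x ≠ (a : ℕ) ∧ p x = a} ∪ (if p a = a then ∅ else {p a}) := by
    ext x
    split_ifs <;> simp only [mem_filter, mem_range, mem_union, mem_singleton] <;> grind
  rw [hsplit, card_union_of_disjoint]
  · split_ifs <;> simp
  · split_ifs
    · simp
    · have := hp (p a) (by omega)
      rw [disjoint_singleton_right, mem_filter]
      omega

lemma le_domNum_parentGraph {ι : Type*} [Finite ι] (x : ι → ℕ) (hx : ∀ i, x i < n)
    (hroot : ∀ i, p (x i) ≠ x i) (hleaf : ∀ i, ∀ y < n, p y = x i → y = x i)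
    (hinj : Function.Injective (p ∘ x)) : Nat.card ι ≤ domNum (parentGraph n p) :=
  SimpleGraph.le_domNum fun _ hD =>
    SimpleGraph.card_le_ncard_of_isDomSet (x := fun i => ⟨x i, hx i⟩)
      (s := fun i => ⟨p (x i), (hp _ (hx i)).trans_lt (hx i)⟩)
      (fun i v => (parentGraph_adj_iff_of_leaf (a := ⟨x i, hx i⟩) (hroot i) (hleaf i) v).trans
        (by rw [Fin.ext_iff]))
      (fun i j h => hinj (Fin.ext_iff.mp h))
      (fun i j h => hroot i <|
        (Fin.ext_iff.mp h).trans (hleaf j (x i) (hx i) (Fin.ext_iff.mp h)).symm)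
      hD

end parentGraph

def blockStart (b : ℕ → ℕ) (i : ℕ) : ℕ := ∑ t ∈ range i, b t

/-- The index of the block containing `x` when `ℕ` is cut into consecutive blocks of lengths
`b 0, b 1, …`. -/
noncomputable def blockIdx (b : ℕ → ℕ) (x : ℕ) : ℕ := sInf {i | x < blockStart b (i + 1)}

section blocks

variable {b : ℕ → ℕ}

lemma blockStart_succ (i : ℕ) : blockStart b (i + 1) = blockStart b i + b i :=
  sum_range_succ b i

lemma blockStart_mono : Monotone (blockStart b) := fun _ _ h =>
  sum_le_sum_of_subset (range_subset_range.mpr h)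

lemma blockIdx_eq_iff {x N : ℕ} (hx : x < blockStart b N) {i : ℕ} :
    blockIdx b x = i ↔ blockStart b i ≤ x ∧ x < blockStart b (i + 1) := by
  have hmem : x < blockStart b (blockIdx b x + 1) :=
    Nat.sInf_mem (s := {i | x < blockStart b (i + 1)}) ⟨N, hx.trans_le (blockStart_mono N.le_succ)⟩
  have hle : blockStart b (blockIdx b x) ≤ x := by
    rcases Nat.eq_zero_or_pos (blockIdx b x) with h | h
    · simp [h, blockStart]
    · have := Nat.notMem_of_lt_sInf (Nat.sub_one_lt h.ne')
      change ¬ x < blockStart b (blockIdx b x - 1 + 1) at this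
      rwa [not_lt, Nat.sub_add_cancel h] at this
  constructor
  · rintro rfl
    exact ⟨hle, hmem⟩
  · rintro ⟨h₁, h₂⟩
    refine le_antisymm (Nat.sInf_le h₂) (not_lt.mp fun hlt => ?_)
    have := blockStart_mono (b := b) (show blockIdx b x + 1 ≤ i by omega)
    omega

lemma blockIdx_lt {x N : ℕ} (hx : x < blockStart b N) : blockIdx b x < N := by
  obtain ⟨h, -⟩ := (blockIdx_eq_iff hx).mp rfl
  by_contra! hN
  have := blockStart_mono (b := b) hN
  omega

lemma card_filter_blockIdx (o : ℕ) {i N : ℕ} (hi : i < N) :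
    #{x ∈ Ico o (o + blockStart b N) | blockIdx b (x - o) = i} = b i := by
  have := blockStart_mono (b := b) (show i + 1 ≤ N by omega)
  have hfib : {x ∈ Ico o (o + blockStart b N) | blockIdx b (x - o) = i}
      = Ico (o + blockStart b i) (o + blockStart b (i + 1)) := by
    ext x
    simp only [mem_filter, mem_Ico]
    constructor
    · rintro ⟨⟨h₁, h₂⟩, h⟩
      have := (blockIdx_eq_iff (x := x - o) (N := N) (by omega)).mp h
      omega
    · rintro ⟨h₁, h₂⟩
      exact ⟨by omega, (blockIdx_eq_iff (x := x - o) (N := N) (by omega)).mpr (by omega)⟩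
  rw [hfib, Nat.card_Ico, blockStart_succ]
  omega

/-- With non-increasing block lengths, every block before a non-empty one is non-empty. -/
lemma blockIdx_le_self (hb : Antitone b) {x N : ℕ} (hx : x < blockStart b N) :
    blockIdx b x ≤ x := by
  obtain ⟨h₁, h₂⟩ := (blockIdx_eq_iff hx).mp rfl
  have hpos : 0 < b (blockIdx b x) := by
    rw [blockStart_succ] at h₂
    omega
  calc blockIdx b x = ∑ _t ∈ range (blockIdx b x), 1 := by simp
    _ ≤ blockStart b (blockIdx b x) :=
      sum_le_sum fun t ht => hpos.trans_le (hb (mem_range.mp ht).le)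
    _ ≤ x := h₁

end blocks

lemma card_filter_Ico_add (P : ℕ → Prop) [DecidablePred P] {a b c : ℕ} (hab : a ≤ b)
    (hbc : b ≤ c) : #{x ∈ Ico a c | P x} = #{x ∈ Ico a b | P x} + #{x ∈ Ico b c | P x} := by
  rw [← Ico_union_Ico_eq_Ico hab hbc, filter_union,
    card_union_of_disjoint (disjoint_filter_filter (Ico_disjoint_Ico_consecutive a b c))]

/-- Number of children of `t` in a tree rooted at `0` in which `t` has degree `D t`. -/
def numChildren (D : ℕ → ℕ) (t : ℕ) : ℕ := D t - if t = 0 then 0 else 1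

/-- The internal vertices `1, 2, …` are handed out in order to the internal vertices `0, 1, …`,
each `t` taking at most `numChildren D t - 1` of them, so that one child slot is left for a leaf. -/
noncomputable def innerParent (D : ℕ → ℕ) (x : ℕ) : ℕ :=
  blockIdx (fun t => numChildren D t - 1) (x - 1)

noncomputable def numInnerChildren (D : ℕ → ℕ) (m t : ℕ) : ℕ :=
  #{x ∈ Ico 1 m | innerParent D x = t}

noncomputable def numLeafChildren (D : ℕ → ℕ) (m t : ℕ) : ℕ :=
  numChildren D t - numInnerChildren D m t

/-- A tree on `0, …, T - 1` with internal vertices `0, …, m - 1` of degrees `D 0, …, D (m - 1)`,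
each carrying a leaf, followed by copies of `K₂` on `T + 2 j, T + 2 j + 1`. -/
noncomputable def extremalParent (D : ℕ → ℕ) (m T x : ℕ) : ℕ :=
  if x = 0 then 0
  else if x < m then innerParent D x
  else if x < T then blockIdx (numLeafChildren D m) (x - m)
  else if (x - T) % 2 = 0 then x else x - 1

noncomputable abbrev extremalForest (D : ℕ → ℕ) (m T k : ℕ) : SimpleGraph (Fin (T + 2 * k)) :=
  parentGraph (T + 2 * k) (extremalParent D m T)

section extremal

variable {D : ℕ → ℕ} {m T : ℕ}

lemma numChildren_antitone (hD : Antitone D) : Antitone (numChildren D) := by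
  intro s t hst
  have := hD hst
  unfold numChildren
  split_ifs <;> omega

variable (hD : Antitone D) (hm : 0 < m) (hD2 : ∀ t < m, 2 ≤ D t) (hT : 2 * m ≤ T)
  (hsum : ∑ t ∈ range m, D t + 2 = T + m)

include hm hD2 hsum in
lemma sum_numChildren : ∑ t ∈ range m, numChildren D t + 1 = T := by
  have key : ∀ j ≤ m, 1 ≤ j → ∑ t ∈ range j, numChildren D t + (j - 1) = ∑ t ∈ range j, D t := by
    intro j hj hj1
    induction j with
    | zero => omega
    | succ j ih =>
      have := hD2 j (by omega)
      rw [sum_range_succ, sum_range_succ, numChildren]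
      rcases Nat.eq_zero_or_pos j with rfl | hj0
      · simp
      · have := ih (by omega) hj0
        rw [if_neg hj0.ne']
        omega
  have := key m le_rfl hm
  omega

include hD2 in
lemma one_le_numChildren {t : ℕ} (ht : t < m) : 1 ≤ numChildren D t := by
  have := hD2 t ht
  unfold numChildren
  split_ifs <;> omega

include hm hD2 hT hsum in
lemma le_blockStart_innerCapacity : m - 1 ≤ blockStart (fun t => numChildren D t - 1) m := by
  have h := sum_numChildren hm hD2 hsum
  rw [blockStart, sum_tsub_distrib _ fun t ht => one_le_numChildren hD2 (mem_range.mp ht)]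
  simp only [sum_const, card_range, smul_eq_mul, mul_one]
  omega

include hD hm hD2 hT hsum in
lemma innerParent_lt {x : ℕ} (hx : 1 ≤ x) (hxm : x < m) : innerParent D x < x := by
  have := le_blockStart_innerCapacity hm hD2 hT hsum
  have := blockIdx_le_self (fun s t h => Nat.sub_le_sub_right (numChildren_antitone hD h) 1)
    (x := x - 1) (N := m) (by omega)
  unfold innerParent
  omega

include hm hD2 hT hsum in
lemma numInnerChildren_lt {t : ℕ} (ht : t < m) : numInnerChildren D m t < numChildren D t := by
  have hcap := le_blockStart_innerCapacity hm hD2 hT hsum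
  have hsub : {x ∈ Ico 1 m | innerParent D x = t}
      ⊆ {x ∈ Ico 1 (1 + blockStart (fun t => numChildren D t - 1) m) |
          blockIdx (fun t => numChildren D t - 1) (x - 1) = t} :=
    filter_subset_filter _ (Ico_subset_Ico_right (by omega))
  have := (card_le_card hsub).trans_eq (card_filter_blockIdx 1 ht)
  have := one_le_numChildren hD2 ht
  unfold numInnerChildren
  omega

include hD hm hD2 hT hsum in
lemma sum_numInnerChildren : ∑ t ∈ range m, numInnerChildren D m t = m - 1 := by
  rw [← Nat.card_Ico 1 m]
  exact (card_eq_sum_card_fiberwise fun x hx => mem_range.mpr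
    ((innerParent_lt hD hm hD2 hT hsum (mem_Ico.mp hx).1 (mem_Ico.mp hx).2).trans
      (mem_Ico.mp hx).2)).symm

include hD hm hD2 hT hsum in
lemma blockStart_numLeafChildren : blockStart (numLeafChildren D m) m = T - m := by
  have h₁ := sum_numChildren hm hD2 hsum
  have h₂ := sum_numInnerChildren hD hm hD2 hT hsum
  change ∑ t ∈ range m, (numChildren D t - numInnerChildren D m t) = T - m
  rw [sum_tsub_distrib _ fun t ht => (numInnerChildren_lt hm hD2 hT hsum (mem_range.mp ht)).le]
  omega

include hD hm hD2 hT hsum in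
lemma extremalParent_lt {x : ℕ} (hx : x ≠ 0) (hxT : x < T) :
    extremalParent D m T x < m ∧ extremalParent D m T x < x := by
  unfold extremalParent
  rw [if_neg hx]
  split_ifs with hxm
  · have := innerParent_lt hD hm hD2 hT hsum (by omega) hxm
    omega
  · have := blockIdx_lt (b := numLeafChildren D m) (x := x - m) (N := m)
      (by rw [blockStart_numLeafChildren hD hm hD2 hT hsum]; omega)
    omega

include hD hm hD2 hT hsum in
lemma extremalParent_le (x : ℕ) : extremalParent D m T x ≤ x := by
  by_cases h : x ≠ 0 ∧ x < T
  · exact (extremalParent_lt hD hm hD2 hT hsum h.1 h.2).2.le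
  · unfold extremalParent
    split_ifs <;> omega

include hD hm hD2 hT hsum in
lemma card_children_extremalParent_of_lt {a : ℕ} (ha : a < m) :
    #{x ∈ Ico 0 T | x ≠ a ∧ extremalParent D m T x = a} = numChildren D a := by
  have hL := blockStart_numLeafChildren hD hm hD2 hT hsum
  rw [card_filter_Ico_add _ (Nat.zero_le 1) (by omega), card_filter_Ico_add _ hm (by omega : m ≤ T)]
  have h₀ : #{x ∈ Ico 0 1 | x ≠ a ∧ extremalParent D m T x = a} = 0 := by
    simp [extremalParent]
  have h₁ : #{x ∈ Ico 1 m | x ≠ a ∧ extremalParent D m T x = a} = numInnerChildren D m a := by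
    refine congrArg card (filter_congr fun x hx => ?_)
    have := innerParent_lt hD hm hD2 hT hsum (mem_Ico.mp hx).1 (mem_Ico.mp hx).2
    simp only [extremalParent, mem_Ico] at hx ⊢
    rw [if_neg (by omega), if_pos hx.2]
    omega
  have h₂ : #{x ∈ Ico m T | x ≠ a ∧ extremalParent D m T x = a} = numLeafChildren D m a := by
    rw [← card_filter_blockIdx (b := numLeafChildren D m) m ha, hL, Nat.add_sub_cancel' (by omega)]
    refine congrArg card (filter_congr fun x hx => ?_)
    simp only [extremalParent, mem_Ico] at hx ⊢
    rw [if_neg (by omega), if_neg (by omega), if_pos hx.2]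
    omega
  have := numInnerChildren_lt hm hD2 hT hsum ha
  rw [h₀, h₁, h₂, numLeafChildren]
  omega

include hD hm hD2 hT hsum in
lemma card_children_extremalParent_of_ge {a : ℕ} (ha : m ≤ a) :
    #{x ∈ Ico 0 T | x ≠ a ∧ extremalParent D m T x = a} = 0 := by
  rw [card_eq_zero, filter_eq_empty_iff]
  rintro x hx ⟨hxa, hpx⟩
  by_cases hx0 : x = 0
  · simp [hx0, extremalParent] at hpx
    omega
  · have := extremalParent_lt hD hm hD2 hT hsum hx0 (mem_Ico.mp hx).2
    omega

include hm hT in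
lemma card_children_extremalParent_tail {k a : ℕ} (ha : a < T + 2 * k) :
    #{x ∈ Ico T (T + 2 * k) | x ≠ a ∧ extremalParent D m T x = a}
      = if T ≤ a ∧ (a - T) % 2 = 0 then 1 else 0 := by
  split_ifs with h
  · rw [card_eq_one]
    refine ⟨a + 1, ext fun x => ?_⟩
    rw [mem_filter, mem_Ico, mem_singleton]
    unfold extremalParent
    constructor
    · intro hx
      split_ifs at hx <;> omega
    · rintro rfl
      rw [if_neg (by omega), if_neg (by omega), if_neg (by omega), if_neg (by omega)]
      omega
  · rw [card_eq_zero, filter_eq_empty_iff]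
    intro x hx
    simp only [mem_Ico, extremalParent] at hx ⊢
    split_ifs <;> omega

include hD hm hD2 hT hsum in
lemma extremalParent_eq_self_iff (x : ℕ) :
    extremalParent D m T x = x ↔ x = 0 ∨ (T ≤ x ∧ (x - T) % 2 = 0) := by
  by_cases h : x ≠ 0 ∧ x < T
  · have := extremalParent_lt hD hm hD2 hT hsum h.1 h.2
    omega
  · unfold extremalParent
    split_ifs <;> omega

include hD hm hD2 hT hsum in
theorem deg_extremalForest (hD1 : ∀ t, m ≤ t → D t = 1) {k : ℕ} (a : Fin (T + 2 * k)) :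
    deg (extremalForest D m T k) a = D a := by
  have hroot := extremalParent_eq_self_iff hD hm hD2 hT hsum a
  rw [deg_parentGraph fun x _ => extremalParent_le hD hm hD2 hT hsum x, range_eq_Ico,
    card_filter_Ico_add _ (Nat.zero_le T) (by omega), card_children_extremalParent_tail hm hT a.2]
  rcases lt_or_ge (a : ℕ) m with ha | ha
  · rw [card_children_extremalParent_of_lt hD hm hD2 hT hsum ha, numChildren]
    have := hD2 a ha
    split_ifs <;> omega
  · rw [card_children_extremalParent_of_ge hD hm hD2 hT hsum ha, hD1 a ha]
    split_ifs <;> omega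

include hD hm hD2 hT hsum in
lemma extremalParent_ne_of_childless {x y : ℕ}
    (hx : m ≤ x ∧ x < T ∨ T ≤ x ∧ (x - T) % 2 = 1) (hyx : y ≠ x) :
    extremalParent D m T y ≠ x := by
  by_cases hy : y ≠ 0 ∧ y < T
  · have := extremalParent_lt hD hm hD2 hT hsum hy.1 hy.2
    omega
  · unfold extremalParent
    split_ifs <;> omega

include hD hm hD2 hT hsum in
lemma extremalParent_firstLeaf {i : ℕ} (hi : i < m) :
    m + blockStart (numLeafChildren D m) i < T ∧
      extremalParent D m T (m + blockStart (numLeafChildren D m) i) = i := by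
  have hL := blockStart_numLeafChildren hD hm hD2 hT hsum
  have h₁ := numInnerChildren_lt hm hD2 hT hsum hi
  have h₂ := blockStart_mono (b := numLeafChildren D m) (show i + 1 ≤ m by omega)
  have h₃ := blockStart_succ (b := numLeafChildren D m) i
  have h₄ : numLeafChildren D m i ≠ 0 := by unfold numLeafChildren; omega
  refine ⟨by omega, ?_⟩
  unfold extremalParent
  rw [if_neg (by omega), if_neg (by omega), if_pos (by omega), Nat.add_sub_cancel_left,
    blockIdx_eq_iff (N := m) (by omega)]
  omega

include hD hm hD2 hT hsum in
/-- Witnessed by the first leaf child of each internal vertex and one end of each `K₂`. -/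
theorem le_domNum_extremalForest (k : ℕ) :
    m + k ≤ domNum (extremalForest D m T k) := by
  let x : Fin m ⊕ Fin k → ℕ :=
    Sum.elim (fun i => m + blockStart (numLeafChildren D m) i) (fun j => T + 2 * j + 1)
  have hpx : ∀ i, extremalParent D m T (x i)
      = Sum.elim (fun i : Fin m => (i : ℕ)) (fun j : Fin k => T + 2 * (j : ℕ)) i := by
    rintro (i | j)
    · exact (extremalParent_firstLeaf hD hm hD2 hT hsum i.2).2
    · change extremalParent D m T (T + 2 * j + 1) = T + 2 * j
      unfold extremalParent
      rw [if_neg (by omega), if_neg (by omega), if_neg (by omega), if_neg (by omega)]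
      omega
  have hx : ∀ i, x i < T + 2 * k ∧ (m ≤ x i ∧ x i < T ∨ T ≤ x i ∧ (x i - T) % 2 = 1) := by
    rintro (i | j)
    · have := (extremalParent_firstLeaf hD hm hD2 hT hsum i.2).1
      simp only [x, Sum.elim_inl]
      omega
    · simp only [x, Sum.elim_inr]
      omega
  have hinj : Function.Injective (extremalParent D m T ∘ x) := by
    rw [show extremalParent D m T ∘ x = _ from funext hpx]
    refine Fin.val_injective.sumElim (fun a b h => ?_) fun i j => ?_
    · simp only [Nat.add_left_cancel_iff, Nat.mul_left_cancel_iff two_pos] at h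
      exact Fin.val_injective h
    · omega
  have := le_domNum_parentGraph (fun x _ => extremalParent_le hD hm hD2 hT hsum x) x
    (fun i => (hx i).1) (fun i => by
      rw [hpx]
      rcases i with i | j
      · simp only [x, Sum.elim_inl]
        omega
      · simp only [x, Sum.elim_inr]
        omega)
    (fun i y _ hy => by_contra fun hne =>
      extremalParent_ne_of_childless hD hm hD2 hT hsum (hx i).2 hne hy) hinj
  simpa using this

end extremal

lemma filter_range_eq_range_card {P : ℕ → Prop} [DecidablePred P]
    (hP : ∀ s t, s ≤ t → P t → P s) (n : ℕ) :
    {x ∈ range n | P x} = range #{x ∈ range n | P x} := by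
  induction n with
  | zero => simp
  | succ n ih =>
    by_cases hn : P n
    · rw [filter_true_of_mem fun t ht => hP t n (Nat.lt_succ_iff.mp (mem_range.mp ht)) hn,
        card_range]
    · rwa [range_add_one, filter_insert, if_neg hn]

/-- `d` extended by `1`s, so that it is antitone on all of `ℕ`. -/
def extendOne {n : ℕ} (d : Fin n → ℕ) (t : ℕ) : ℕ := if h : t < n then d ⟨t, h⟩ else 1

section extendOne

variable {n : ℕ} {d : Fin n → ℕ}

lemma extendOne_val (i : Fin n) : extendOne d i = d i := dif_pos i.2

lemma one_le_extendOne (hpos : ∀ i, 0 < d i) (t : ℕ) : 1 ≤ extendOne d t := by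
  unfold extendOne
  split_ifs
  exacts [hpos _, le_rfl]

lemma extendOne_antitone (hmono : Antitone d) (hpos : ∀ i, 0 < d i) : Antitone (extendOne d) := by
  intro s t hst
  by_cases ht : t < n
  · rw [extendOne, dif_pos ht, extendOne, dif_pos (by omega)]
    exact hmono (Fin.mk_le_mk.mpr hst)
  · rw [extendOne, dif_neg ht]
    exact one_le_extendOne hpos s

lemma two_le_extendOne_iff (hmono : Antitone d) (hpos : ∀ i, 0 < d i) (t : ℕ) :
    2 ≤ extendOne d t ↔ t < #{i | 2 ≤ d i} := by
  have hrange := filter_range_eq_range_card (P := (2 ≤ extendOne d ·))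
    (fun s t hst ht => ht.trans (extendOne_antitone hmono hpos hst)) n
  have hcard : #{i | 2 ≤ d i} = #{x ∈ range n | 2 ≤ extendOne d x} := by
    simp only [← card_filter_fin, extendOne_val]
  by_cases ht : t < n
  · simpa [ht, ← hcard] using Finset.ext_iff.mp hrange t
  · have := (card_filter_le univ fun i => 2 ≤ d i).trans_eq (card_fin n)
    rw [extendOne, dif_neg ht]
    omega

end extendOne

theorem exists_isAcyclic_degSeq_eq_le_domNum {n T k : ℕ} (d : Fin n → ℕ) (hmono : Antitone d)
    (hpos : ∀ i, 0 < d i) (hn : n = T + 2 * k) (hm : 0 < #{i | 2 ≤ d i})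
    (hT : 2 * #{i | 2 ≤ d i} ≤ T) (hsum : ∑ i, d i + 2 = 2 * T + 2 * k) :
    ∃ G : SimpleGraph (Fin n), G.IsAcyclic ∧ degSeq G = univ.val.map d ∧
      #{i | 2 ≤ d i} + k ≤ domNum G := by
  subst hn
  set m := #{i | 2 ≤ d i}
  have hD := extendOne_antitone hmono hpos
  have hD2 : ∀ t < m, 2 ≤ extendOne d t := fun t => (two_le_extendOne_iff hmono hpos t).mpr
  have hD1 : ∀ t, m ≤ t → extendOne d t = 1 := fun t ht => by
    have := two_le_extendOne_iff hmono hpos t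
    have := one_le_extendOne hpos t
    omega
  have hsumD : ∑ t ∈ range m, extendOne d t + 2 = T + m := by
    have hmn : m ≤ T + 2 * k := (card_filter_le _ _).trans_eq (card_fin _)
    have hsplit := sum_range_add_sum_Ico (extendOne d) hmn
    rw [sum_congr rfl fun t ht => hD1 t (mem_Ico.mp ht).1, sum_const, Nat.card_Ico, smul_eq_mul,
      mul_one, ← Fin.sum_univ_eq_sum_range (extendOne d) (T + 2 * k)] at hsplit
    simp only [extendOne_val] at hsplit
    omega
  refine ⟨extremalForest (extendOne d) m T k,
    parentGraph_isAcyclic fun x _ => extremalParent_le hD hm hD2 hT hsumD x, ?_,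
    le_domNum_extremalForest hD hm hD2 hT hsumD k⟩
  exact Multiset.map_congr rfl fun v _ =>
    (deg_extremalForest hD hm hD2 hT hsumD hD1 v).trans (extendOne_val v)

theorem stmt_9_general (n c : ℕ) (hc : 0 < c) (d : Fin n → ℕ) (hmono : Antitone d)
    (hpos : ∀ i, 0 < d i) (hsum : ∑ i, d i = 2 * n - 2 * c)
    (hd1 : ∀ i : Fin n, (i : ℕ) = 0 → 2 ≤ d i)
    (hcs : c - 1 < ((Finset.univ.filter fun i => d i = 1).card - (Finset.univ.filter fun i => 2 ≤ d i).card) ⌈/⌉ 2) :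
    IsGreatest {k | ∃ G : SimpleGraph (Fin n), G.IsAcyclic ∧
        degSeq G = Finset.univ.val.map d ∧ domNum G = k}
      (n - (Finset.univ.filter fun i => d i = 1).card + c - 1) := by
  set m := #{i | 2 ≤ d i}
  have hleaves : #{i | d i = 1} + m = n := by
    have := card_filter_add_card_filter_not (s := univ) (fun i => d i = 1)
    rw [card_univ, Fintype.card_fin] at this
    convert this using 3
    ext i
    have := hpos i
    simp only [mem_filter, mem_univ, true_and]
    omega
  rw [Nat.ceilDiv_eq_add_pred_div] at hcs
  have hn : 0 < n := by omega
  have hm : 0 < m := card_pos.mpr ⟨⟨0, hn⟩, by simpa using hd1 ⟨0, hn⟩ rfl⟩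
  have hup : ∀ G : SimpleGraph (Fin n), G.IsAcyclic → degSeq G = univ.val.map d →
      domNum G ≤ m + (c - 1) := fun G hG hdeg => by
    have := hG.two_mul_domNum_add_sum_le hdeg hpos hm
    rw [Fintype.card_fin] at this
    omega
  obtain ⟨G, hG, hdeg, hlow⟩ := exists_isAcyclic_degSeq_eq_le_domNum (T := n - 2 * (c - 1))
    (k := c - 1) d hmono hpos (by omega) hm (by omega) (by omega)
  refine ⟨⟨G, hG, hdeg, by have := hup G hG hdeg; omega⟩, ?_⟩
  rintro _ ⟨G', hG', hdeg', rfl⟩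
  have := hup G' hG' hdeg'
  omega

theorem stmt_9 (n c : ℕ) (hc : 0 < c) (d : Fin n → ℕ) (hmono : Antitone d)
    (hpos : ∀ i, 0 < d i) (hsum : ∑ i, d i = 2 * n - 2 * c)
    (hd1 : ∀ i : Fin n, (i : ℕ) = 0 → 2 ≤ d i)
    (h12 : (Finset.univ.filter fun i => 2 ≤ d i).card < (Finset.univ.filter fun i => d i = 1).card)
    (hcs : c - 1 < ((Finset.univ.filter fun i => d i = 1).card - (Finset.univ.filter fun i => 2 ≤ d i).card) ⌈/⌉ 2) :
    IsGreatest {k | ∃ G : SimpleGraph (Fin n), G.IsAcyclic ∧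
        degSeq G = Finset.univ.val.map d ∧ domNum G = k}
      (n - (Finset.univ.filter fun i => d i = 1).card + c - 1) :=
  stmt_9_general n c hc d hmono hpos hsum hd1 hcs
end

section
/- Let F be a forest in which every vertex of degree at least 2 has at most one neighbor of degree 1, and suppose F has no isolated vertices and no component of order 2. If U is the set of vertices of degree at least 2 that are not support vertices, then F has a dominating set of size at most n_1 + ⌈(|U| - 2)/3⌉, where n_1 is the number of vertices of degree 1 (assuming U is nonempty). -/
open SimpleGraph Finset

/-!
Sending each support vertex to a leaf neighbour is injective, so there are at most `n₁` support
vertices. They dominate every leaf (a leaf whose neighbour is not a support vertex would lie in a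
component of order 2) and every vertex adjacent to one of them; any other vertex outside them
lies in `U` together with all its neighbours, so it has degree at least 2 in `F[U]`.

In any forest on `n` vertices, the vertices of degree at least 2 are dominated by
`⌈(n - 2)/3⌉` vertices. Take a leaf `v` of the subforest spanned by the vertices of degree at
least 2. Let `R` be `v` with two pendant neighbours and `x = v`, or, if `v` has only one pendant
neighbour `a`, let `R = {a, v, b}` with `b` its other neighbour and `x = b`. Then `x` dominates
the vertices of degree at least 2 in `R` and every vertex adjacent to `R`, so deleting `R` and
inducting costs one vertex per three deleted.
-/

open SimpleGraph Finset

namespace SimpleGraph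

variable {V : Type*} {G : SimpleGraph V} {u v : V}

theorem IsAcyclic.exists_neighborSet_subsingleton [Finite V] [Nonempty V] (hG : G.IsAcyclic) :
    ∃ v, (G.neighborSet v).Subsingleton := by
  obtain ⟨u, v, p, hp, hmax⟩ := Walk.exists_isPath_forall_isPath_length_le_length G
  -- `u` is an end of a longest path, so each neighbour of `u` lies on it, hence is `p.snd`.
  have hsnd : ∀ w, G.Adj u w → w = p.snd := fun w hw ↦ by
    refine hG.eq_snd_of_adj_start hp hw (by_contra fun hwp ↦ ?_)
    simpa using hmax _ _ _ (hp.cons hwp (h := hw.symm))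
  exact ⟨u, fun a ha b hb ↦ (hsnd a ha).trans (hsnd b hb).symm⟩

theorem IsAcyclic.exists_mem_neighborSet_inter_subsingleton (hG : G.IsAcyclic) {W : Set V}
    (hW : W.Finite) (hne : W.Nonempty) : ∃ v ∈ W, (G.neighborSet v ∩ W).Subsingleton := by
  have := hW.to_subtype
  have := hne.to_subtype
  obtain ⟨⟨v, hv⟩, hsub⟩ := (hG.induce W).exists_neighborSet_subsingleton
  exact ⟨v, hv, fun a ha b hb ↦ congrArg Subtype.val (@hsub ⟨a, ha.2⟩ ha.1 ⟨b, hb.2⟩ hb.1)⟩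

theorem IsAcyclic.exists_triple_dominated (hG : G.IsAcyclic) {s : Finset V}
    (hs : ∃ v ∈ s, (G.neighborSet v ∩ s).Nontrivial) :
    ∃ x, ∃ R ⊆ s, #R = 3 ∧
      (∀ r ∈ R, (G.neighborSet r ∩ s).Nontrivial → r = x ∨ G.Adj x r) ∧
      (∀ v ∈ s, v ∉ R → ∀ r ∈ R, G.Adj r v → G.Adj x v) := by
  classical
  set W : Set V := {v | v ∈ s ∧ (G.neighborSet v ∩ s).Nontrivial}
  obtain ⟨v, ⟨hvs, hvW⟩, hsub⟩ := hG.exists_mem_neighborSet_inter_subsingleton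
    (s.finite_toSet.subset fun v hv ↦ hv.1) (W := W) hs
  have hleaf : ∀ a ∈ s, a ∉ W → G.Adj v a → ∀ w ∈ s, G.Adj a w → w = v :=
    fun a has haW hva w hws haw ↦
      Set.not_nontrivial_iff.1 (fun h ↦ haW ⟨has, h⟩) ⟨haw, hws⟩ ⟨hva.symm, hvs⟩
  obtain ⟨a, ⟨hva, has : a ∈ s⟩, haW⟩ : ∃ a ∈ G.neighborSet v ∩ s, a ∉ W := by
    by_contra! h
    exact hvW.not_subsingleton (hsub.anti fun a ha ↦ ⟨ha.1, h a ha⟩)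
  by_cases h : ∃ a' ∈ s, a' ≠ a ∧ G.Adj v a' ∧ a' ∉ W
  · obtain ⟨a', has', ha'a, hva', ha'W⟩ := h
    refine ⟨v, {v, a, a'}, by simp [insert_subset_iff, hvs, has, has'],
      card_eq_three.2 ⟨v, a, a', hva.ne, hva'.ne, ha'a.symm, rfl⟩, ?_, ?_⟩
    · simp only [mem_insert, mem_singleton]
      rintro r (rfl | rfl | rfl) hr
      · exact .inl rfl
      · exact absurd ⟨has, hr⟩ haW
      · exact absurd ⟨has', hr⟩ ha'W
    · simp only [mem_insert, mem_singleton, not_or]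
      rintro w hws ⟨hwv, -, -⟩ r (rfl | rfl | rfl) hrw
      · exact hrw
      · exact absurd (hleaf _ has haW hva w hws hrw) hwv
      · exact absurd (hleaf _ has' ha'W hva' w hws hrw) hwv
  · obtain ⟨b, ⟨hvb, hbs : b ∈ s⟩, hba⟩ := hvW.exists_ne a
    have hbW : b ∈ W := by_contra fun hbW ↦ h ⟨b, hbs, hba, hvb, hbW⟩
    refine ⟨b, {a, v, b}, by simp [insert_subset_iff, hvs, has, hbs],
      card_eq_three.2 ⟨a, v, b, hva.ne.symm, hba.symm, hvb.ne, rfl⟩, ?_, ?_⟩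
    · simp only [mem_insert, mem_singleton]
      rintro r (rfl | rfl | rfl) hr
      · exact absurd ⟨has, hr⟩ haW
      · exact .inr hvb.symm
      · exact .inl rfl
    · simp only [mem_insert, mem_singleton, not_or]
      rintro w hws ⟨hwa, hwv, hwb⟩ r (rfl | rfl | rfl) hrw
      · exact absurd (hleaf _ has haW hva w hws hrw) hwv
      · by_cases hwW : w ∈ W
        · exact absurd (hsub ⟨hrw, hwW⟩ ⟨hvb, hbW⟩) hwb
        · exact absurd ⟨w, hws, hwa, hrw, hwW⟩ h
      · exact hrw

theorem IsAcyclic.exists_dominating_nontrivial_neighborSet_inter (hG : G.IsAcyclic)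
    (s : Finset V) :
    ∃ D : Finset V, #D ≤ (#s - 2) ⌈/⌉ 3 ∧
      ∀ v ∈ s, (G.neighborSet v ∩ s).Nontrivial → v ∉ D → ∃ u ∈ D, G.Adj u v := by
  classical
  induction s using Finset.strongInduction with | H s ih =>
  by_cases hs : ∃ v ∈ s, (G.neighborSet v ∩ s).Nontrivial
  swap
  · exact ⟨∅, by simp, fun v hvs hv _ ↦ absurd ⟨v, hvs, hv⟩ hs⟩
  obtain ⟨x, R, hRs, hR, hRdom, hRout⟩ := hG.exists_triple_dominated hs
  obtain ⟨D, hD, hDdom⟩ := ih (s \ R) (sdiff_ssubset hRs (card_pos.1 (by omega)))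
  refine ⟨insert x D, ?_, fun v hvs hv hvD ↦ ?_⟩
  · have := card_insert_le x D
    have := card_sdiff_of_subset hRs
    have := card_le_card hRs
    rw [Nat.ceilDiv_eq_add_pred_div] at hD ⊢
    omega
  by_cases hvR : v ∈ R
  · rcases hRdom v hvR hv with rfl | hxv
    · exact absurd (mem_insert_self _ _) hvD
    · exact ⟨x, mem_insert_self _ _, hxv⟩
  by_cases hRv : ∃ r ∈ R, G.Adj r v
  · obtain ⟨r, hr, hrv⟩ := hRv
    exact ⟨x, mem_insert_self _ _, hRout v hvs hvR r hr hrv⟩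
  push Not at hRv
  have hnbrs : G.neighborSet v ∩ ↑(s \ R) = G.neighborSet v ∩ s := by
    ext w
    simpa using fun hvw _ hwR ↦ hRv w hwR hvw.symm
  obtain ⟨u, hu, huv⟩ := hDdom v (mem_sdiff.2 ⟨hvs, hvR⟩) (hnbrs ▸ hv)
    fun h ↦ hvD (mem_insert_of_mem h)
  exact ⟨u, mem_insert_of_mem hu, huv⟩

theorem connectedComponentMk_supp_eq_pair (hu : G.neighborSet u = {v})
    (hv : G.neighborSet v = {u}) : (G.connectedComponentMk u).supp = {u, v} := by
  have huv : G.Adj u v := (hu ▸ rfl : v ∈ G.neighborSet u)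
  ext x
  rw [ConnectedComponent.mem_supp_iff, ConnectedComponent.eq, reachable_comm,
    reachable_iff_reflTransGen]
  refine ⟨fun h ↦ ?_, ?_⟩
  · induction h with
    | refl => exact .inl rfl
    | tail _ hyz ih =>
      rcases ih with rfl | rfl
      · exact .inr (hu.subset hyz)
      · exact .inl (hv.subset hyz)
  · rintro (rfl | rfl)
    · exact .refl
    · exact .single huv

end SimpleGraph

section Degree

variable {V : Type*} [Fintype V] {G : SimpleGraph V} {u v : V}

theorem two_le_deg_iff : 2 ≤ deg G v ↔ (G.neighborSet v).Nontrivial :=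
  Set.one_lt_ncard_iff_nontrivial

theorem deg_eq_one_iff : deg G v = 1 ↔ ∃ u, G.neighborSet v = {u} :=
  Set.ncard_eq_one

theorem deg_pos_of_adj (h : G.Adj u v) : 0 < deg G v :=
  (Set.ncard_pos (Set.toFinite _)).2 ⟨u, h.symm⟩

theorem ncard_setOf_isSupport_le : {v | IsSupport G v}.ncard ≤ {v | deg G v = 1}.ncard := by
  have hleaf : ∀ v, IsSupport G v → ∃ u, G.Adj v u ∧ deg G u = 1 := fun v hv ↦ hv.2
  choose! f hf using hleaf
  refine Set.ncard_le_ncard_of_injOn f (fun v hv ↦ (hf v hv).2) fun v hv w hw hvw ↦ ?_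
  obtain ⟨u, hu⟩ := deg_eq_one_iff.1 (hf v hv).2
  have hv' : v ∈ G.neighborSet (f v) := (hf v hv).1.symm
  have hw' : w ∈ G.neighborSet (f v) := hvw ▸ (hf w hw).1.symm
  rw [hu] at hv' hw'
  exact hv'.trans hw'.symm

theorem exists_adj_isSupport_of_deg_eq_one
    (h2 : ∀ C : G.ConnectedComponent, C.supp.ncard ≠ 2) (hv : deg G v = 1) :
    ∃ w, G.Adj v w ∧ IsSupport G w := by
  obtain ⟨w, hvw⟩ := deg_eq_one_iff.1 hv
  have hadj : G.Adj v w := hvw.symm.subset rfl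
  refine ⟨w, hadj, ?_, v, hadj.symm, hv⟩
  by_contra hw
  obtain ⟨v', hwv'⟩ := deg_eq_one_iff.1 (by have := deg_pos_of_adj hadj; omega : deg G w = 1)
  have hwv : G.neighborSet w = {v} := by
    rwa [Set.mem_singleton_iff.1 (hwv'.subset hadj.symm)]
  exact h2 _ (by rw [connectedComponentMk_supp_eq_pair hvw hwv, Set.ncard_pair hadj.ne])

theorem neighborSet_subset_of_not_isSupport (hv : 2 ≤ deg G v) (hvS : ¬IsSupport G v)
    (hS : ∀ w, G.Adj v w → ¬IsSupport G w) :
    G.neighborSet v ⊆ {w | 2 ≤ deg G w ∧ ¬IsSupport G w} := fun w hvw ↦ by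
  have : deg G w ≠ 1 := fun hw ↦ hvS ⟨hv, w, hvw, hw⟩
  have := deg_pos_of_adj hvw
  exact ⟨by omega, hS w hvw⟩

end Degree

theorem stmt_17_general {V : Type*} [Fintype V] (G : SimpleGraph V) (hac : G.IsAcyclic)
    (hiso : ∀ v, 0 < deg G v)
    (h2 : ∀ C : G.ConnectedComponent, C.supp.ncard ≠ 2) :
    ∃ D : Set V, IsDomSet G D ∧
      D.ncard ≤ {v | deg G v = 1}.ncard
        + ({v | 2 ≤ deg G v ∧ ¬ IsSupport G v}.ncard - 2) ⌈/⌉ 3 := by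
  classical
  set U := {v | 2 ≤ deg G v ∧ ¬ IsSupport G v}
  obtain ⟨DU, hDU, hDUdom⟩ := hac.exists_dominating_nontrivial_neighborSet_inter U.toFinset
  refine ⟨{v | IsSupport G v} ∪ DU, fun v hv ↦ ?_, ?_⟩
  · simp only [Set.mem_union, mem_coe, not_or] at hv
    obtain ⟨hvS, hvD⟩ := hv
    by_cases hS : ∃ w, G.Adj v w ∧ IsSupport G w
    · obtain ⟨w, hvw, hw⟩ := hS
      exact ⟨w, .inl hw, hvw.symm⟩
    push Not at hS
    obtain hv1 | hv2 : deg G v = 1 ∨ 2 ≤ deg G v := by have := hiso v; omega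
    · obtain ⟨w, hvw, hw⟩ := exists_adj_isSupport_of_deg_eq_one h2 hv1
      exact absurd hw (hS w hvw)
    have hNU := neighborSet_subset_of_not_isSupport hv2 hvS hS
    obtain ⟨u, hu, huv⟩ := hDUdom v (Set.mem_toFinset.2 ⟨hv2, hvS⟩)
      (by rwa [Set.coe_toFinset, Set.inter_eq_left.2 hNU, ← two_le_deg_iff]) hvD
    exact ⟨u, .inr hu, huv⟩
  · calc _ ≤ {v | IsSupport G v}.ncard + (DU : Set V).ncard := Set.ncard_union_le _ _
      _ ≤ _ := add_le_add ncard_setOf_isSupport_le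
        (by rwa [Set.ncard_coe_finset, Set.ncard_eq_toFinset_card'])

theorem stmt_17 {V : Type*} [Fintype V] (G : SimpleGraph V) (hac : G.IsAcyclic)
    (hone : ∀ v, 2 ≤ deg G v → {u | G.Adj v u ∧ deg G u = 1}.ncard ≤ 1)
    (hiso : ∀ v, 0 < deg G v)
    (h2 : ∀ C : G.ConnectedComponent, C.supp.ncard ≠ 2)
    (hU : {v | 2 ≤ deg G v ∧ ¬ IsSupport G v}.Nonempty) :
    ∃ D : Set V, IsDomSet G D ∧
      D.ncard ≤ {v | deg G v = 1}.ncard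
        + ({v | 2 ≤ deg G v ∧ ¬ IsSupport G v}.ncard - 2) ⌈/⌉ 3 :=
  stmt_17_general G hac hiso h2
end
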